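/- For a symmetric lattice n-homomorphism T : L^n → M between distributive lattices with diagonal P_T(x) = T(x,...,x), and any x_1,...,x_n ∈ L, one has P_T(⋁_{i=1}^n x_i) = ⋁ T(x_1^{k_1},...,x_n^{k_n}), where the join runs over all tuples (k_1,...,k_n) of nonnegative integers with k_1 + ... + k_n = n, and T(x_1^{k_1},...,x_n^{k_n}) denotes T applied with x_i repeated k_i times. -/

import Mathlib

def median {L : Type*} [DistribLattice L] {n : ℕ} (k : ℕ) (hk1 : 1 ≤ k) (hkn : k ≤ n)
    (x : Fin n → L) : L :=
  ((Finset.univ.powersetCard (n + 1 - k)).attach).sup'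
    (Finset.attach_nonempty_iff.mpr
      (Finset.powersetCard_nonempty.mpr (by simp [Finset.card_univ]; omega)))
    fun s => s.1.inf'
      (Finset.card_pos.mp (by
        have h := (Finset.mem_powersetCard.mp s.2).2
        omega)) x

def medianInf {L : Type*} [DistribLattice L] {n : ℕ} (k : ℕ) (hk1 : 1 ≤ k) (hkn : k ≤ n)
    (x : Fin n → L) : L :=
  ((Finset.univ.powersetCard (n + 1 - k)).attach).inf'
    (Finset.attach_nonempty_iff.mpr
      (Finset.powersetCard_nonempty.mpr (by simp [Finset.card_univ]; omega)))
    fun s => s.1.sup'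
      (Finset.card_pos.mp (by
        have h := (Finset.mem_powersetCard.mp s.2).2
        omega)) x
def TotalOrderizationInvariant {L : Type*} [DistribLattice L] {A : Type*} {n : ℕ}
    (T : (Fin n → L) → A) : Prop :=
  ∀ x : Fin n → L,
    T x = T fun k => median (k.1 + 1) (Nat.succ_le_succ (Nat.zero_le _)) k.2 x

/-- `T` is symmetric: invariant under every permutation of its arguments. -/
def IsSymmetricMap {L A : Type*} {n : ℕ} (T : (Fin n → L) → A) : Prop :=
  ∀ (σ : Equiv.Perm (Fin n)) (x : Fin n → L), T (x ∘ σ) = T x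
/-- `T : Lⁿ → M` is a lattice n-homomorphism: in each coordinate separately it
preserves binary joins and binary meets. -/
def IsLatticeMultiHom {L M : Type*} [DistribLattice L] [DistribLattice M] {n : ℕ}
    (T : (Fin n → L) → M) : Prop :=
  ∀ (x : Fin n → L) (i : Fin n) (y : L),
    T (Function.update x i (x i ⊔ y)) = T x ⊔ T (Function.update x i y) ∧
    T (Function.update x i (x i ⊓ y)) = T x ⊓ T (Function.update x i y)

/-- `P : L → M` is a lattice homomorphism. -/
def IsLatticeHomMap {L M : Type*} [DistribLattice L] [DistribLattice M] (P : L → M) : Prop :=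
  ∀ a b : L, P (a ⊔ b) = P a ⊔ P b ∧ P (a ⊓ b) = P a ⊓ P b

/-- The vector with xᵢ repeated kᵢ times (in order), where ∑ kᵢ = n. -/
def repVec {L : Type*} {n : ℕ} (k : Fin n → ℕ) (hk : ∑ i, k i = n) (x : Fin n → L) :
    Fin n → L :=
  fun t =>
    (List.flatten (List.ofFn fun i => List.replicate (k i) (x i))).get
      (Fin.cast (by simp [List.length_flatten, Function.comp, List.sum_ofFn, hk]) t)

/-!
Expanding every coordinate of `T (⋁ x, …, ⋁ x)` by join preservation writes it as the join of
`T (x ∘ f)` over all maps `f : Fin n → Fin n`. By symmetry `T (x ∘ f)` depends only on the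
multiplicities `kᵢ = #f⁻¹(i)`, which sum to `n`, and `x ∘ f` can be permuted into
`(x₁^{k₁}, …, xₙ^{kₙ})`; conversely each such vector is of the form `x ∘ f`.
-/

open Finset Function

section Expansion

variable {L M : Type*} [DistribLattice L] [DistribLattice M] {n : ℕ} {T : (Fin n → L) → M}

theorem IsLatticeMultiHom.map_update_sup' (hT : IsLatticeMultiHom T) (z : Fin n → L)
    (i : Fin n) {ι : Type*} {s : Finset ι} (hs : s.Nonempty) (g : ι → L) :
    T (update z i (s.sup' hs g)) = s.sup' hs fun j => T (update z i (g j)) :=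
  apply_sup'_eq_sup'_comp hs (fun a => T (update z i a)) fun a b => by
    simpa using (hT (update z i a) i b).1

theorem IsLatticeMultiHom.map_sup'_eq_sup'_pi (hT : IsLatticeMultiHom T) {ι : Type*}
    [Fintype ι] [Nonempty ι] (y : Fin n → ι → L) :
    T (fun i => univ.sup' univ_nonempty (y i)) =
      univ.sup' univ_nonempty fun f : Fin n → ι => T fun i => y i (f i) := by
  classical
  -- expand the coordinates in `S` one at a time, the others being frozen at `z`
  suffices h : ∀ (S : Finset (Fin n)) (z : Fin n → L),
      T (S.piecewise (fun i => univ.sup' univ_nonempty (y i)) z) =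
        univ.sup' univ_nonempty fun f : Fin n → ι => T (S.piecewise (fun i => y i (f i)) z) by
    simpa using h univ (fun i => univ.sup' univ_nonempty (y i))
  intro S
  induction S using Finset.induction_on with
  | empty => simp
  | @insert i S hi ih =>
    intro z
    set A : ι → (Fin n → ι) → M :=
      fun j f => T (S.piecewise (fun t => y t (f t)) (update z i (y i j))) with hA
    have hA_update : ∀ j f, A j f = A j (update f i j) := fun j f => by
      refine congrArg T (S.piecewise_congr (fun t ht => ?_) fun _ _ => rfl)
      rw [update_of_ne (ne_of_mem_of_not_mem ht hi)]
    calc T ((insert i S).piecewise (fun i => univ.sup' univ_nonempty (y i)) z)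
        = univ.sup' univ_nonempty fun j => univ.sup' univ_nonempty (A j) := by
          rw [piecewise_insert, hT.map_update_sup']
          simp only [update_piecewise_of_notMem _ _ _ hi, ih]
          rfl
      _ = univ.sup' univ_nonempty fun f => A (f i) f := by
          refine le_antisymm (sup'_le _ _ fun j _ => sup'_le _ _ fun f _ => ?_)
            (sup'_le _ _ fun f _ => le_sup'_of_le _ (mem_univ (f i)) (le_sup' _ (mem_univ f)))
          rw [hA_update]
          exact le_sup'_of_le _ (mem_univ (update f i j)) (by simp)
      _ = _ := by
          simp only [hA, piecewise_insert, update_piecewise_of_notMem _ _ _ hi]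

end Expansion

theorem Function.exists_perm_comp_eq_of_card_fiber_eq {α β : Type*} [Fintype α] [DecidableEq β]
    {f g : α → β} (h : ∀ b, #{a | f a = b} = #{a | g a = b}) :
    ∃ σ : Equiv.Perm α, f ∘ σ = g :=
  ⟨Equiv.ofFiberEquiv fun b => Fintype.equivOfCardEq <| by simp only [Fintype.card_subtype, h],
    funext <| Equiv.ofFiberEquiv_map _⟩

theorem IsSymmetricMap.apply_comp_eq_of_card_fiber_eq {L A ι : Type*} [DecidableEq ι] {n : ℕ}
    {T : (Fin n → L) → A} (hT : IsSymmetricMap T) (x : ι → L) {f g : Fin n → ι}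
    (h : ∀ i, #{t | f t = i} = #{t | g t = i}) : T (x ∘ f) = T (x ∘ g) := by
  obtain ⟨σ, rfl⟩ := exists_perm_comp_eq_of_card_fiber_eq h
  exact (hT σ (x ∘ f)).symm

section repVec

variable {n : ℕ} (k : Fin n → ℕ) (hk : ∑ i, k i = n)

theorem repVec_comp {L L' : Type*} (φ : L → L') (x : Fin n → L) :
    repVec k hk (φ ∘ x) = φ ∘ repVec k hk x := by
  have hmap : (List.ofFn fun i => List.replicate (k i) (φ (x i))).flatten =
      ((List.ofFn fun i => List.replicate (k i) (x i)).flatten).map φ := by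
    simp [List.map_flatten, List.map_ofFn, Function.comp_def]
  funext t
  simp only [repVec, comp_apply, List.get_of_eq hmap, List.get_eq_getElem, List.getElem_map]
  rfl

theorem repVec_eq_comp {L : Type*} (x : Fin n → L) : repVec k hk x = x ∘ repVec k hk id :=
  repVec_comp k hk x id

theorem card_fiber_repVec_id (i : Fin n) : #{t | repVec k hk id t = i} = k i := by
  have hlen : ((List.ofFn fun j => List.replicate (k j) j).flatten).length = n := by
    simp [List.length_flatten, Function.comp_def, List.sum_ofFn, hk]
  refine (Fin.card_filter_univ_eq_vector_get_eq_count i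
    (⟨_, hlen⟩ : List.Vector (Fin n) n)).trans ?_
  simp [List.count_flatten, List.map_ofFn, Function.comp_def, List.count_replicate, List.sum_ofFn]

end repVec

/-- P_T(⋁ᵢ xᵢ) is the join of T(x₁^{k₁},...,xₙ^{kₙ}) over all tuples (k₁,...,kₙ) of
nonnegative integers summing to n. -/
theorem diagonal_sup_eq {L M : Type*} [DistribLattice L] [DistribLattice M]
    {n : ℕ} (hn : 2 ≤ n) (T : (Fin n → L) → M) (hT : IsLatticeMultiHom T)
    (hsymm : IsSymmetricMap T) (x : Fin n → L) :
    (T fun _ =>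
        Finset.univ.sup'
          (by have : Nonempty (Fin n) := ⟨⟨0, by omega⟩⟩; exact Finset.univ_nonempty) x) =
      (Finset.Nat.antidiagonalTuple n n).attach.sup'
        (Finset.attach_nonempty_iff.mpr
          ⟨fun i => if i = ⟨0, by omega⟩ then n else 0, by
            rw [Finset.Nat.mem_antidiagonalTuple]; simp⟩)
        (fun k => T (repVec k.1 (Finset.Nat.mem_antidiagonalTuple.mp k.2) x)) := by
  have : Nonempty (Fin n) := ⟨⟨0, by omega⟩⟩
  refine (hT.map_sup'_eq_sup'_pi fun _ => x).trans <| le_antisymm ?_ ?_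
  · refine sup'_le _ _ fun f _ => ?_
    let k : Fin n → ℕ := fun i => #{t | f t = i}
    have hk : ∑ i, k i = n := by
      simpa using (card_eq_sum_card_fiberwise (s := univ) fun t _ => mem_univ (f t)).symm
    refine le_sup'_of_le _ (mem_attach _ ⟨k, Nat.mem_antidiagonalTuple.mpr hk⟩) (le_of_eq ?_)
    rw [repVec_eq_comp]
    exact hsymm.apply_comp_eq_of_card_fiber_eq x fun i => (card_fiber_repVec_id k hk i).symm
  · refine sup'_le _ _ fun k _ => ?_
    rw [repVec_eq_comp]
    exact le_sup' (fun f => T (x ∘ f)) (mem_univ _)
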